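/- arXiv:math/0301027 — 2 statements merged into one kernel-verified Lean document; each statement's English description precedes it below -/
import Mathlib

section
/- Let C be a finite tensor category over an algebraically closed field k. If P is a projective object of C, then its right dual P* (and likewise its left dual *P) is projective. Consequently, every projective object of C is injective and every injective object is projective, and every indecomposable projective object has a unique simple subobject (its socle). -/
open CategoryTheory MonoidalCategory

universe u v w

/-- A *finite tensor category* over an algebraically closed field `k`. -/
class FiniteTensorCategory (k : Type u) (C : Type v) [Field k]
    [Category.{w} C] [Abelian C] [CategoryTheory.Linear k C] [MonoidalCategory C]
    [MonoidalPreadditive C] [MonoidalLinear k C] [RigidCategory C] : Prop where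
  homFinite : ∀ X Y : C, FiniteDimensional k (X ⟶ Y)
  finiteLength : ∀ X : C, WellFoundedGT (Subobject X) ∧ WellFoundedLT (Subobject X)
  simpleUnit : Simple (𝟙_ C)
  finitelyManySimples : ∃ (ι : Type) (_ : Finite ι) (L : ι → C),
      (∀ i, Simple (L i)) ∧ ∀ X : C, Simple X → ∃ i, Nonempty (X ≅ L i)
  projectiveCovers : ∀ X : C, Simple X →
      ∃ (P : C) (f : P ⟶ X), Projective P ∧ Epi f ∧
        ∀ (R : C) (g : R ⟶ P), Epi (g ≫ f) → Epi g

/-- An object of an abelian category is indecomposable if it is nonzero and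
is not the biproduct of two nonzero objects. -/
def IsIndecomposable {C : Type v} [Category.{w} C] [Abelian C] (Q : C) : Prop :=
  ¬ Limits.IsZero Q ∧ ∀ (A B : C), (Q ≅ A ⊞ B) → Limits.IsZero A ∨ Limits.IsZero B

/-!
Let `π : Q₀ ⟶ 𝟙` be a projective cover of the unit. For a projective `P`, the evaluation
`Pᘁ ⊗ P ⟶ 𝟙` lifts through `π`, and the zigzag identity exhibits `Pᘁ` as a retract of `Q₀ ⊗ Pᘁ`,
which is projective because tensoring with an object has an exact right adjoint; similarly for
`ᘁP`. Taking left duals gives bijections `(A ⟶ Yᘁ) ≃ (Y ⟶ ᘁA)` and turns monomorphisms into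
epimorphisms, so the right dual of a projective is injective; applied to `ᘁX` this makes every
projective `X = (ᘁX)ᘁ` injective. Conversely, since `𝟙` is simple the coevaluation
`𝟙 ⟶ Q₀ ⊗ Q₀ᘁ` is mono, so an injective `X` splits off `Q₀ ⊗ Q₀ᘁ ⊗ X`.

An indecomposable object has no nontrivial idempotents, so by Fitting's lemma every element of
the finite-dimensional algebra `End Q` is invertible or nilpotent. In an injective `Q`, two
distinct simple subobjects `S`, `T` would give an endomorphism fixing `S` and killing `T`, which
is neither.
-/

theorem isUnit_or_isNilpotent_of_isIdempotentElem {k A : Type*} [Field k] [Ring A]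
    [Algebra k A] [FiniteDimensional k A]
    (hidem : ∀ e : A, IsIdempotentElem e → e = 0 ∨ e = 1) (a : A) :
    IsUnit a ∨ IsNilpotent a := by
  have : IsArtinianRing A := IsArtinianRing.of_finite k A
  obtain ⟨n, hcompl, hn⟩ := ((LinearMap.mulLeft k a).eventually_isCompl_ker_pow_range_pow.and
    (Filter.eventually_ne_atTop 0)).exists
  rw [LinearMap.pow_mulLeft] at hcompl
  obtain ⟨e, he, f, ⟨b, rfl⟩, hef⟩ :=
    Submodule.mem_sup.mp (hcompl.codisjoint.eq_top ▸ Submodule.mem_top (x := (1 : A)))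
  rw [LinearMap.mem_ker, LinearMap.mulLeft_apply] at he
  rw [LinearMap.mulLeft_apply] at hef
  -- Fitting: `A = ker (a ^ n * ·) ⊕ a ^ n * A`, and the kernel component `e` of `1` is idempotent
  have hee : IsIdempotentElem e := by
    have hker : e * e - e ∈ LinearMap.ker (LinearMap.mulLeft k (a ^ n)) := by
      simp [mul_sub, ← mul_assoc, he]
    have hrange : e * e - e ∈ LinearMap.range (LinearMap.mulLeft k (a ^ n)) :=
      ⟨-(b * e), by
        rw [LinearMap.mulLeft_apply, mul_neg, ← mul_assoc, eq_sub_of_add_eq' hef]; noncomm_ring⟩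
    have := hcompl.disjoint.eq_bot ▸ Submodule.mem_inf.mpr ⟨hker, hrange⟩
    exact sub_eq_zero.mp ((Submodule.mem_bot k).mp this)
  rcases hidem e hee with rfl | rfl
  · rw [zero_add] at hef
    exact Or.inl ((isUnit_pow_iff hn).mp (IsUnit.of_mul_eq_one b hef))
  · exact Or.inr ⟨n, by simpa using he⟩

namespace CategoryTheory

open Limits ExactPairing

section Rigid

variable {C : Type*} [Category C] [MonoidalCategory C]

instance (X : C) [HasLeftDual X] : (tensorLeft X).PreservesEpimorphisms :=
  Functor.preservesEpimorphisms_of_adjunction (tensorLeftAdjunction (ᘁX) X)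

instance (X : C) [HasRightDual X] : (tensorRight X).PreservesEpimorphisms :=
  Functor.preservesEpimorphisms_of_adjunction (tensorRightAdjunction X Xᘁ)

instance (X : C) [HasRightDual X] : (tensorLeft X).PreservesMonomorphisms :=
  Functor.preservesMonomorphisms_of_adjunction (tensorLeftAdjunction X Xᘁ)

instance (X : C) [HasLeftDual X] : (tensorRight X).PreservesMonomorphisms :=
  Functor.preservesMonomorphisms_of_adjunction (tensorRightAdjunction (ᘁX) X)

theorem leftAdjointMate_bijective (B Y : C) [HasLeftDual B] [HasRightDual Y] :
    Function.Bijective (fun g : B ⟶ Yᘁ => (ᘁg : Y ⟶ ᘁB)) := by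
  let e : (B ⟶ Yᘁ) ≃ (Y ⟶ ᘁB) :=
    ((Iso.refl B).homCongr (λ_ (Yᘁ)).symm).trans <|
      (tensorRightHomEquiv B Y (Yᘁ) (𝟙_ C)).symm.trans <|
        (tensorLeftHomEquiv Y (ᘁB) B (𝟙_ C)).trans ((Iso.refl Y).homCongr (ρ_ (ᘁB)))
  have he : (fun g : B ⟶ Yᘁ => (ᘁg : Y ⟶ ᘁB)) = e := funext fun g => by
    simp only [e, Equiv.trans_apply, Iso.homCongr_apply, Iso.refl_inv, Category.id_comp,
      Iso.symm_hom, ← tensorRightHomEquiv_whiskerRight_comp_evaluation, Equiv.symm_apply_apply]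
    rw [eq_comm, ← Iso.eq_comp_inv]
    exact tensorLeftHomEquiv_whiskerRight_comp_evaluation g
  exact he ▸ e.bijective

variable [RigidCategory C]

theorem projective_tensor_of_projective_right (X : C) {P : C} (hP : Projective P) :
    Projective (X ⊗ P) :=
  (tensorLeftAdjunction (ᘁX) X).map_projective P hP

theorem projective_tensor_of_projective_left {P : C} (hP : Projective P) (X : C) :
    Projective (P ⊗ X) :=
  (tensorRightAdjunction X Xᘁ).map_projective P hP

theorem ExactPairing.projective_right_of_left {Q : C} (π : Q ⟶ 𝟙_ C) [Epi π]
    (hQ : Projective Q) {X Y : C} [ExactPairing X Y] (hX : Projective X) : Projective Y := by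
  have := projective_tensor_of_projective_right Y hX
  have := projective_tensor_of_projective_left hQ Y
  let t := Projective.factorThru (ε_ X Y) π
  refine Retract.projective (Y := Q ⊗ Y)
    { i := (ρ_ Y).inv ≫ Y ◁ η_ X Y ≫ (α_ _ _ _).inv ≫ t ▷ Y
      r := π ▷ Y ≫ (λ_ Y).hom
      retract := ?_ }
  slice_lhs 4 5 => rw [← comp_whiskerRight, Projective.factorThru_comp]
  slice_lhs 2 4 => rw [coevaluation_evaluation]
  simp

theorem ExactPairing.projective_left_of_right {Q : C} (π : Q ⟶ 𝟙_ C) [Epi π]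
    (hQ : Projective Q) {X Y : C} [ExactPairing X Y] (hY : Projective Y) : Projective X := by
  have := projective_tensor_of_projective_left hY X
  have := projective_tensor_of_projective_right X hQ
  let t := Projective.factorThru (ε_ X Y) π
  refine Retract.projective (Y := X ⊗ Q)
    { i := (λ_ X).inv ≫ η_ X Y ▷ X ≫ (α_ _ _ _).hom ≫ X ◁ t
      r := X ◁ π ≫ (ρ_ X).hom
      retract := ?_ }
  slice_lhs 4 5 => rw [← MonoidalCategory.whiskerLeft_comp, Projective.factorThru_comp]
  slice_lhs 2 4 => rw [evaluation_coevaluation]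
  simp

instance epi_leftAdjointMate_of_mono {A B : C} (i : A ⟶ B) [Mono i] : Epi (ᘁi) := by
  refine ⟨fun {T} u v huv => ?_⟩
  have key : ∀ w : (ᘁA : C) ⟶ T,
      η_ (ᘁB : C) B ≫ ((ᘁi) ≫ w) ▷ B = (η_ (ᘁA : C) A ≫ w ▷ A) ≫ T ◁ i := by
    intro w
    rw [comp_whiskerRight, coevaluation_comp_leftAdjointMate_assoc, Category.assoc,
      whisker_exchange]
  have : Mono (T ◁ i) := (tensorLeft T).map_mono i
  have h := (cancel_mono (T ◁ i)).mp ((key u).symm.trans (huv ▸ key v))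
  apply_fun (tensorRightHomEquiv _ (ᘁA : C) A _).symm at h
  simpa using h

theorem injective_rightDual_of_projective {Y : C} [HasRightDual Y] (hY : Projective Y) :
    Injective Yᘁ where
  factors {A B} g i _ := by
    obtain ⟨h, hh⟩ := (leftAdjointMate_bijective B Y).2 (Projective.factorThru (ᘁg) (ᘁi))
    refine ⟨h, (leftAdjointMate_bijective A Y).1 ?_⟩
    simp only [comp_leftAdjointMate, hh, Projective.factorThru_comp]

end Rigid

section Indecomposable

variable {C : Type*} [Category C] [Abelian C]

theorem Indecomposable.eq_zero_or_eq_id_of_idem {Q : C} (hQ : Indecomposable Q) (e : Q ⟶ Q)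
    (he : e ≫ e = e) : e = 0 ∨ e = 𝟙 Q := by
  have hι : kernel.ι (𝟙 Q - e) ≫ e = kernel.ι (𝟙 Q - e) := by
    have := kernel.condition (𝟙 Q - e)
    rw [Preadditive.comp_sub, Category.comp_id, sub_eq_zero] at this
    exact this.symm
  -- `Q` is the biproduct of the images `kernel (𝟙 Q - e)` of `e` and `kernel e` of `𝟙 Q - e`
  let b : BinaryBicone (kernel (𝟙 Q - e)) (kernel e) :=
    { pt := Q
      fst := kernel.lift _ e (by simp [he])
      snd := kernel.lift _ (𝟙 Q - e) (by simp [he])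
      inl := kernel.ι _
      inr := kernel.ι _
      inl_fst := by ext; simp [hι]
      inl_snd := by ext; simp [hι]
      inr_fst := by ext; simp
      inr_snd := by ext; simp }
  have hb := isBinaryBilimitOfTotal b (by simp [b])
  rcases hQ.2 _ _ (biprod.uniqueUpToIso _ _ hb) with h | h
  · left
    simpa [b] using h.eq_of_tgt b.fst 0 =≫ b.inl
  · right
    have : 𝟙 Q - e = 0 := by simpa [b] using h.eq_of_tgt b.snd 0 =≫ b.inr
    exact (sub_eq_zero.mp this).symm

theorem Indecomposable.isUnit_or_isNilpotent {k : Type*} [Field k] [Linear k C] {Q : C}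
    [FiniteDimensional k (End Q)] (hQ : Indecomposable Q) (φ : End Q) :
    IsUnit φ ∨ IsNilpotent φ :=
  isUnit_or_isNilpotent_of_isIdempotentElem (k := k) (A := End Q)
    (fun e he => hQ.eq_zero_or_eq_id_of_idem e he.eq) φ

end Indecomposable

section Socle

variable {C : Type*} [Category C] [Abelian C] {Q : C}

theorem Subobject.mono_arrow_comp_cokernel_π_of_inf_eq_bot {S T : Subobject Q} (h : S ⊓ T = ⊥) :
    Mono (S.arrow ≫ cokernel.π T.arrow) := by
  refine Preadditive.mono_of_cancel_zero _ fun {W} w hw => ?_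
  rw [← Category.assoc] at hw
  have hT : T.Factors (w ≫ S.arrow) :=
    Abelian.monoLift_comp T.arrow _ hw ▸ Subobject.factors_comp_arrow _
  have hST : (S ⊓ T).Factors (w ≫ S.arrow) :=
    (Subobject.inf_factors _).mpr ⟨Subobject.factors_comp_arrow w, hT⟩
  rw [h, Subobject.bot_factors_iff_zero] at hST
  exact zero_of_comp_mono S.arrow hST

theorem Injective.exists_endo_of_inf_eq_bot [Injective Q] {S T : Subobject Q} (h : S ⊓ T = ⊥) :
    ∃ φ : End Q, S.arrow ≫ φ = S.arrow ∧ T.arrow ≫ φ = 0 := by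
  have := Subobject.mono_arrow_comp_cokernel_π_of_inf_eq_bot h
  refine ⟨cokernel.π T.arrow ≫ Injective.factorThru S.arrow (S.arrow ≫ cokernel.π T.arrow),
    ?_, by simp⟩
  rw [← Category.assoc, Injective.comp_factorThru]

theorem Injective.eq_of_isAtom [Injective Q] (hQ : ∀ φ : End Q, IsUnit φ ∨ IsNilpotent φ)
    {S T : Subobject Q} (hS : IsAtom S) (hT : IsAtom T) : S = T := by
  by_contra hne
  obtain ⟨φ, hφS, hφT⟩ := exists_endo_of_inf_eq_bot (hS.disjoint_of_ne hT hne).eq_bot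
  have arrow_ne_zero {U : Subobject Q} (hU : IsAtom U) : U.arrow ≠ 0 := fun h0 =>
    hU.ne_bot (by rw [← Subobject.mk_arrow U, Subobject.mk_eq_bot_iff_zero, h0])
  rcases hQ φ with hunit | ⟨n, hn⟩
  · have : IsIso (φ : Q ⟶ Q) := (isUnit_iff_isIso φ).mp hunit
    exact arrow_ne_zero hT ((cancel_mono (φ : Q ⟶ Q)).mp (by simpa using hφT))
  · have hpow : ∀ m : ℕ, S.arrow ≫ (φ ^ m : End Q) = S.arrow := fun m => by
      induction m with
      | zero => exact Category.comp_id _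
      | succ m ih => rw [pow_succ, End.mul_def, ← Category.assoc, hφS, ih]
    exact arrow_ne_zero hS (by simpa [hn] using (hpow n).symm)

theorem Injective.existsUnique_simple_subobject [Injective Q] [IsArtinianObject Q]
    (hQ₀ : ¬IsZero Q) (hQ : ∀ φ : End Q, IsUnit φ ∨ IsNilpotent φ) :
    ∃! S : Subobject Q, Simple (S : C) := by
  obtain ⟨S, hS⟩ := exists_simple_subobject hQ₀
  refine ⟨S, hS, fun T hT => ?_⟩
  rw [subobject_simple_iff_isAtom] at hS hT
  exact eq_of_isAtom hQ hT hS

end Socle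

section Coevaluation

variable {C : Type*} [Category C] [Abelian C] [MonoidalCategory C] [MonoidalPreadditive C]

theorem coevaluation_ne_zero {X Y : C} [ExactPairing X Y] (hX : ¬IsZero X) : η_ X Y ≠ 0 := by
  intro h
  have := ExactPairing.evaluation_coevaluation X Y
  rw [h] at this
  simp only [MonoidalPreadditive.zero_whiskerRight, zero_comp] at this
  exact hX ((IsZero.iff_id_eq_zero X).mpr (by simpa using ((λ_ X).inv ≫= this =≫ (ρ_ X).hom).symm))

theorem mono_coevaluation [Simple (𝟙_ C)] {X Y : C} [ExactPairing X Y] (hX : ¬IsZero X) :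
    Mono (η_ X Y) :=
  Preadditive.mono_of_kernel_zero (kernel_zero_of_nonzero_from_simple (coevaluation_ne_zero hX))

variable [RigidCategory C]

theorem projective_of_injective [Simple (𝟙_ C)] {Q X : C} (π : Q ⟶ 𝟙_ C) [Epi π]
    (hQ : Projective Q) (hX : Injective X) : Projective X := by
  have hQ₀ : ¬IsZero Q := fun h => Simple.not_isZero (𝟙_ C) (h.of_epi π)
  have := mono_coevaluation (Y := Qᘁ) hQ₀
  let m : X ⟶ (Q ⊗ Qᘁ) ⊗ X := (λ_ X).inv ≫ η_ Q Qᘁ ▷ X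
  have : Mono m := by
    have : Mono (η_ Q Qᘁ ▷ X) := (tensorRight X).map_mono _
    infer_instance
  have := projective_tensor_of_projective_left (projective_tensor_of_projective_left hQ Qᘁ) X
  exact Retract.projective ⟨m, Injective.factorThru (𝟙 X) m, Injective.comp_factorThru _ _⟩

end Coevaluation
end CategoryTheory

theorem dual_projective_general {k : Type u} {C : Type v} [Field k]
    [Category.{w} C] [Abelian C] [CategoryTheory.Linear k C] [MonoidalCategory C]
    [MonoidalPreadditive C] [MonoidalLinear k C] [RigidCategory C]
    [FiniteTensorCategory k C] :
    (∀ P : C, Projective P → Projective (Pᘁ) ∧ Projective ((ᘁP : C))) ∧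
    (∀ X : C, Projective X ↔ Injective X) ∧
    (∀ Q : C, Projective Q → IsIndecomposable Q →
      ∃! S : Subobject Q, Simple (S : C)) := by
  have : Simple (𝟙_ C) := FiniteTensorCategory.simpleUnit (k := k)
  obtain ⟨Q₀, π, hQ₀, hπ, -⟩ := FiniteTensorCategory.projectiveCovers (k := k) (𝟙_ C) this
  have duals (P : C) (hP : Projective P) : Projective Pᘁ ∧ Projective (ᘁP : C) :=
    ⟨ExactPairing.projective_right_of_left π hQ₀ hP,
      ExactPairing.projective_left_of_right π hQ₀ hP⟩
  have projective_iff_injective (X : C) : Projective X ↔ Injective X :=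
    ⟨fun hX => injective_rightDual_of_projective (Y := (ᘁX : C)) (duals X hX).2,
      projective_of_injective π hQ₀⟩
  refine ⟨duals, projective_iff_injective, fun Q hQ hQind => ?_⟩
  have : Injective Q := (projective_iff_injective Q).mp hQ
  have : IsArtinianObject Q := ⟨(FiniteTensorCategory.finiteLength (k := k) Q).2⟩
  have : FiniteDimensional k (End Q) := FiniteTensorCategory.homFinite Q Q
  exact Injective.existsUnique_simple_subobject hQind.1
    (Indecomposable.isUnit_or_isNilpotent (k := k) hQind)

/-- In a finite tensor category, duals of projective objects are projective; consequently
projective and injective objects coincide, and every indecomposable projective object has a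
unique simple subobject (its socle). -/
theorem dual_projective {k : Type u} {C : Type v} [Field k] [IsAlgClosed k]
    [Category.{w} C] [Abelian C] [CategoryTheory.Linear k C] [MonoidalCategory C]
    [MonoidalPreadditive C] [MonoidalLinear k C] [RigidCategory C]
    [FiniteTensorCategory k C] :
    (∀ P : C, Projective P → Projective (Pᘁ) ∧ Projective ((ᘁP : C))) ∧
    (∀ X : C, Projective X ↔ Injective X) ∧
    (∀ Q : C, Projective Q → IsIndecomposable Q →
      ∃! S : Subobject Q, Simple (S : C)) :=
  dual_projective_general (k := k)
end

section
/- (Categorical Lorenz theorem) Let C be a finite tensor category over an algebraically closed field k which is not semisimple and which admits an isomorphism of additive functors u: Id → (−)** (for example, any non-semisimple braided finite tensor category). Then the Cartan matrix C_{ij} = [P_i : L_j] of C, viewed as a matrix over the ground field k, is degenerate (i.e. its determinant vanishes in k). -/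
open CategoryTheory MonoidalCategory Limits

universe u v w

/-!
For `φ : X ⟶ Xᘁᘁ` let `tr φ = ε ∘ (φ ▷ Xᘁ) ∘ η : 𝟙 ⟶ 𝟙`. Tensoring and dualising are exact in a
rigid abelian category, so `X ↦ tr (u X)` is additive on short exact sequences for natural `u`, and
therefore `tr (u X) = ∑ⱼ [X : Lⱼ] dⱼ` where `tr (u Lⱼ) = dⱼ • 𝟙`. If `tr (u P) ≠ 0` for a projective
`P`, then `𝟙` is a retract of the projective `Pᘁᘁ ⊗ Pᘁ`, and then every `X ≅ 𝟙 ⊗ X` is projective.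
So when `C` is not semisimple the Cartan matrix kills `d`, and `d ≠ 0` since `tr (u Lᵢ)` is
invertible for `Lᵢ ≅ 𝟙`.
-/

namespace CategoryTheory

section AdditiveInvariants

def IsAdditiveOnShortExact {C : Type*} [Category C] [HasZeroMorphisms C] {M : Type*}
    [Add M] (f : C → M) : Prop :=
  ∀ S : ShortComplex C, S.ShortExact → f S.X₂ = f S.X₁ + f S.X₃

variable {C : Type*} [Category C] [Abelian C] {M : Type*} [AddCancelCommMonoid M]

lemma exists_shortExact_simple_X₁ [∀ X : C, IsArtinianObject X] {X : C} (hX : ¬ IsZero X) :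
    ∃ S : ShortComplex C, S.ShortExact ∧ Simple S.X₁ ∧ S.X₂ = X := by
  obtain ⟨S, hS⟩ := exists_simple_subobject hX
  exact ⟨ShortComplex.mk S.arrow (cokernel.π S.arrow) (cokernel.condition _),
    ⟨ShortComplex.exact_of_g_is_cokernel _ (cokernelIsCokernel _)⟩, hS, rfl⟩

namespace IsAdditiveOnShortExact

variable {f : C → M} (hf : IsAdditiveOnShortExact f)
include hf

lemma eq_zero_of_isZero {X : C} (hX : IsZero X) : f X = 0 :=
  left_eq_add.1 <| hf (ShortComplex.mk (𝟙 X) (𝟙 X) (hX.eq_of_src _ _))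
    ⟨ShortComplex.exact_of_isZero_X₂ _ hX⟩

open ZeroObject in
lemma eq_of_iso {X Y : C} (e : X ≅ Y) : f X = f Y := by
  have := hf (ShortComplex.mk e.hom (0 : Y ⟶ 0) comp_zero)
    ⟨(ShortComplex.exact_iff_epi _ rfl).2 inferInstance⟩
  rw [this, hf.eq_zero_of_isZero (isZero_zero C), add_zero]

lemma eq_sum_nsmul [∀ X : C, IsArtinianObject X] {ι : Type*} [Fintype ι] [DecidableEq ι]
    (L : ι → C) (hL : ∀ X : C, Simple X → ∃ i, Nonempty (X ≅ L i)) (μ : C → ι → ℕ)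
    (hμL : ∀ i j, μ (L i) j = if i = j then 1 else 0)
    (hμ : ∀ j, IsAdditiveOnShortExact (μ · j)) (X : C) :
    f X = ∑ j, μ X j • f (L j) := by
  induction h : ∑ j, μ X j using Nat.strong_induction_on generalizing X with
  | _ n ih =>
  by_cases hX : IsZero X
  · simp [hf.eq_zero_of_isZero hX, fun j => (hμ j).eq_zero_of_isZero hX]
  obtain ⟨S, hS, hS₁, rfl⟩ := exists_shortExact_simple_X₁ hX
  obtain ⟨i, ⟨e⟩⟩ := hL _ hS₁
  have hμS : ∀ j, μ S.X₂ j = (if i = j then 1 else 0) + μ S.X₃ j := fun j => by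
    rw [← hμL, ← (hμ j).eq_of_iso e]
    exact hμ j S hS
  have hlt : ∑ j, μ S.X₃ j < n := by
    simp [← h, hμS, Finset.sum_add_distrib]
  rw [hf S hS, hf.eq_of_iso e, ih _ hlt _ rfl]
  simp [hμS, add_smul, Finset.sum_add_distrib]

end IsAdditiveOnShortExact

end AdditiveInvariants

namespace MonoidalCategory

variable {C : Type*} [Category C] [MonoidalCategory C]

section Duals

instance isLeftAdjoint_tensorLeft (W : C) [HasLeftDual W] : (tensorLeft W).IsLeftAdjoint :=
  (tensorLeftAdjunction (ᘁW) W).isLeftAdjoint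

instance isRightAdjoint_tensorLeft (W : C) [HasRightDual W] : (tensorLeft W).IsRightAdjoint :=
  (tensorLeftAdjunction W (Wᘁ)).isRightAdjoint

instance isLeftAdjoint_tensorRight (W : C) [HasRightDual W] : (tensorRight W).IsLeftAdjoint :=
  (tensorRightAdjunction W (Wᘁ)).isLeftAdjoint

instance isRightAdjoint_tensorRight (W : C) [HasLeftDual W] : (tensorRight W).IsRightAdjoint :=
  (tensorRightAdjunction (ᘁW) W).isRightAdjoint

instance epi_whiskerLeft (W : C) [HasLeftDual W] {X Y : C} (f : X ⟶ Y) [Epi f] : Epi (W ◁ f) :=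
  (tensorLeft W).map_epi f

instance mono_whiskerLeft (W : C) [HasRightDual W] {X Y : C} (f : X ⟶ Y) [Mono f] :
    Mono (W ◁ f) :=
  (tensorLeft W).map_mono f

instance mono_whiskerRight (W : C) [HasLeftDual W] {X Y : C} (f : X ⟶ Y) [Mono f] :
    Mono (f ▷ W) :=
  (tensorRight W).map_mono f

def rightDualHomEquiv (T X : C) [HasRightDual X] : (T ⟶ Xᘁ) ≃ (T ⊗ X ⟶ 𝟙_ C) where
  toFun g := g ▷ X ≫ ε_ X (Xᘁ)
  invFun h := tensorRightHomEquiv T X (Xᘁ) (𝟙_ C) h ≫ (λ_ _).hom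
  left_inv g := by simp
  right_inv h := by
    apply (tensorRightHomEquiv T X (Xᘁ) (𝟙_ C)).injective
    rw [tensorRightHomEquiv_whiskerRight_comp_evaluation, Category.assoc, Iso.hom_inv_id,
      Category.comp_id]

lemma rightDualHomEquiv_comp_rightAdjointMate {T X Y : C} [HasRightDual X] [HasRightDual Y]
    (g : T ⟶ Yᘁ) (f : X ⟶ Y) :
    rightDualHomEquiv T X (g ≫ fᘁ) = T ◁ f ≫ rightDualHomEquiv T Y g := by
  simp [rightDualHomEquiv, rightAdjointMate_comp_evaluation, whisker_exchange_assoc]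

lemma coevaluation_whiskerLeft_injective (X : C) [HasRightDual X] (T : C) :
    Function.Injective (fun g : Xᘁ ⟶ T => η_ X (Xᘁ) ≫ X ◁ g) := by
  intro g g' h
  simpa using congrArg (tensorLeftHomEquiv (𝟙_ C) X (Xᘁ) T).symm h

lemma isEquivalence_tensorRight_of_iso_unit {X : C} (e : 𝟙_ C ≅ X) :
    (tensorRight X).IsEquivalence :=
  Functor.isEquivalence_of_iso ((rightUnitorNatIso C).symm ≪≫ (tensoringRight C).mapIso e)

/-- At `𝟙_ C`, the unit and counit of `tensorRight X ⊣ tensorRight Y` are `η_ X Y` and `ε_ X Y`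
up to unitors. -/
lemma isIso_coevaluation_of_iso_unit {X Y : C} [ExactPairing X Y] (e : 𝟙_ C ≅ X) :
    IsIso (η_ X Y) := by
  have := isEquivalence_tensorRight_of_iso_unit e
  simpa [tensorRightAdjunction, tensorRightHomEquiv] using
    NatIso.isIso_app_of_isIso (tensorRightAdjunction X Y).unit (𝟙_ C)

lemma isIso_evaluation_of_iso_unit {X Y : C} [ExactPairing X Y] (e : 𝟙_ C ≅ X) :
    IsIso (ε_ X Y) := by
  have := isEquivalence_tensorRight_of_iso_unit e
  simpa [tensorRightAdjunction, tensorRightHomEquiv] using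
    NatIso.isIso_app_of_isIso (tensorRightAdjunction X Y).counit (𝟙_ C)

end Duals

section Exactness

variable [Abelian C] [MonoidalPreadditive C] [RigidCategory C]

@[simp]
lemma rightAdjointMate_zero {X Y : C} : (0 : X ⟶ Y)ᘁ = 0 := by
  simp [rightAdjointMate]

lemma mono_rightAdjointMate_of_epi {X Y : C} (f : X ⟶ Y) [Epi f] : Mono (fᘁ) := by
  refine Preadditive.mono_of_cancel_zero _ fun {T} g hg => (rightDualHomEquiv T Y).injective ?_
  rw [← cancel_epi (T ◁ f), ← rightDualHomEquiv_comp_rightAdjointMate, hg]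
  simp [rightDualHomEquiv]

lemma epi_rightAdjointMate_of_mono {X Y : C} (f : X ⟶ Y) [Mono f] : Epi (fᘁ) := by
  refine Preadditive.epi_of_cancel_zero _ fun {T} g hg => coevaluation_whiskerLeft_injective X T ?_
  dsimp only
  rw [← cancel_mono (f ▷ T), MonoidalPreadditive.whiskerLeft_zero, comp_zero, zero_comp,
    Category.assoc, whisker_exchange, ← coevaluation_comp_rightAdjointMate_assoc,
    ← MonoidalCategory.whiskerLeft_comp, hg, MonoidalPreadditive.whiskerLeft_zero, comp_zero]

noncomputable def _root_.CategoryTheory.ShortComplex.rightDual (S : ShortComplex C) :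
    ShortComplex C :=
  ShortComplex.mk (S.gᘁ) (S.fᘁ) (by rw [← comp_rightAdjointMate, S.zero, rightAdjointMate_zero])

lemma exists_comp_rightAdjointMate_eq {S : ShortComplex C} (hS : S.ShortExact) {T : C}
    (x : T ⟶ S.X₂ᘁ) (hx : x ≫ S.fᘁ = 0) : ∃ y : T ⟶ S.X₃ᘁ, y ≫ S.gᘁ = x := by
  have hTS := hS.map_of_exact (tensorLeft T)
  have := hTS.epi_g
  have hx' : T ◁ S.f ≫ rightDualHomEquiv T S.X₂ x = 0 := by
    rw [← rightDualHomEquiv_comp_rightAdjointMate, hx]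
    simp [rightDualHomEquiv]
  obtain ⟨h, hh⟩ : ∃ h : T ⊗ S.X₃ ⟶ 𝟙_ C, T ◁ S.g ≫ h = rightDualHomEquiv T S.X₂ x :=
    ⟨hTS.exact.desc _ hx', hTS.exact.g_desc _ hx'⟩
  refine ⟨(rightDualHomEquiv T S.X₃).symm h, (rightDualHomEquiv T S.X₂).injective ?_⟩
  rw [rightDualHomEquiv_comp_rightAdjointMate, Equiv.apply_symm_apply, hh]

lemma _root_.CategoryTheory.ShortComplex.ShortExact.rightDual {S : ShortComplex C}
    (hS : S.ShortExact) : S.rightDual.ShortExact := by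
  have := hS.mono_f
  have := hS.epi_g
  have : Mono S.rightDual.f := mono_rightAdjointMate_of_epi S.g
  have : Epi S.rightDual.g := epi_rightAdjointMate_of_mono S.f
  refine ⟨S.rightDual.exact_iff_exact_up_to_refinements.2 fun T x hx => ?_⟩
  obtain ⟨y, hy⟩ := exists_comp_rightAdjointMate_eq hS x hx
  exact ⟨T, 𝟙 T, inferInstance, y, (Category.id_comp x).trans hy.symm⟩

/-- Additivity of the trace on endomorphisms preserving `X₁ ⊆ X₂`, written internally: `a`, `b`,
`c` play the roles of the endomorphism of `X₁`, `X₂`, `X₃`. Up to refinement `a` lifts along the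
epimorphism `X₁ᘁᘁ ◁ fᘁ`, and `b` minus that lift factors through `X₂ᘁᘁ ⊗ X₃ᘁ`. -/
lemma comp_evaluation_eq_add_of_shortExact {S : ShortComplex C} (hS : S.ShortExact) {T : C}
    (a : T ⟶ (S.X₁ᘁ)ᘁ ⊗ S.X₁ᘁ) (b : T ⟶ (S.X₂ᘁ)ᘁ ⊗ S.X₂ᘁ) (c : T ⟶ (S.X₃ᘁ)ᘁ ⊗ S.X₃ᘁ)
    (hab : b ≫ (S.X₂ᘁ)ᘁ ◁ S.fᘁ = a ≫ (S.fᘁ)ᘁ ▷ S.X₁ᘁ)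
    (hbc : b ≫ (S.gᘁ)ᘁ ▷ S.X₂ᘁ = c ≫ (S.X₃ᘁ)ᘁ ◁ S.gᘁ) :
    b ≫ ε_ _ _ = a ≫ ε_ _ _ + c ≫ ε_ _ _ := by
  have := hS.mono_f
  have := hS.epi_g
  have : Epi (S.fᘁ) := epi_rightAdjointMate_of_mono S.f
  have : Mono (S.gᘁ) := mono_rightAdjointMate_of_epi S.g
  have hB := hS.rightDual.map_of_exact (tensorLeft ((S.X₂ᘁ)ᘁ))
  have := hB.mono_f
  obtain ⟨T', π, _, y, hy⟩ :=
    surjective_up_to_refinements_of_epi ((S.X₁ᘁ)ᘁ ◁ S.fᘁ) a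
  have hz : (π ≫ b - y ≫ (S.fᘁ)ᘁ ▷ S.X₂ᘁ) ≫ (S.X₂ᘁ)ᘁ ◁ S.fᘁ = 0 := by
    rw [Preadditive.sub_comp, Category.assoc, hab, ← Category.assoc, hy, Category.assoc,
      Category.assoc, whisker_exchange, sub_self]
  obtain ⟨w, hw⟩ : ∃ w, w ≫ (S.X₂ᘁ)ᘁ ◁ S.gᘁ = π ≫ b - y ≫ (S.fᘁ)ᘁ ▷ S.X₂ᘁ :=
    ⟨_, hB.exact.lift_f _ hz⟩
  have hc : π ≫ c = w ≫ (S.gᘁ)ᘁ ▷ S.X₃ᘁ := by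
    rw [← cancel_mono ((S.X₃ᘁ)ᘁ ◁ S.gᘁ), Category.assoc, ← hbc, ← Category.assoc,
      ← sub_add_cancel (π ≫ b) (y ≫ (S.fᘁ)ᘁ ▷ S.X₂ᘁ), ← hw, Preadditive.add_comp,
      Category.assoc, Category.assoc, ← comp_whiskerRight, ← comp_rightAdjointMate,
      ← comp_rightAdjointMate, S.zero]
    simp [whisker_exchange]
  rw [← cancel_epi π, Preadditive.comp_add, ← Category.assoc, ← Category.assoc,
    ← Category.assoc, ← sub_add_cancel (π ≫ b) (y ≫ (S.fᘁ)ᘁ ▷ S.X₂ᘁ), ← hw, hy, hc]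
  simp only [Preadditive.add_comp, Category.assoc, rightAdjointMate_comp_evaluation]
  abel

end Exactness

section Trace

noncomputable def doubleDualTrace {X : C} [HasRightDual X] [HasRightDual Xᘁ] (φ : X ⟶ (Xᘁ)ᘁ) :
    𝟙_ C ⟶ 𝟙_ C :=
  η_ X (Xᘁ) ≫ φ ▷ Xᘁ ≫ ε_ (Xᘁ) ((Xᘁ)ᘁ)

lemma doubleDualTrace_add_of_shortExact [Abelian C] [MonoidalPreadditive C] [RigidCategory C]
    {S : ShortComplex C} (hS : S.ShortExact)
    (φ : ∀ X : C, X ⟶ (Xᘁ)ᘁ) (hφ : ∀ {X Y : C} (f : X ⟶ Y), f ≫ φ Y = φ X ≫ (fᘁ)ᘁ) :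
    doubleDualTrace (φ S.X₂) = doubleDualTrace (φ S.X₁) + doubleDualTrace (φ S.X₃) := by
  simp only [doubleDualTrace, ← Category.assoc]
  refine comp_evaluation_eq_add_of_shortExact hS _ _ _ ?_ ?_
  · rw [Category.assoc, ← whisker_exchange, coevaluation_comp_rightAdjointMate_assoc,
      ← comp_whiskerRight, hφ, comp_whiskerRight, Category.assoc]
  · rw [Category.assoc, ← comp_whiskerRight, ← hφ, comp_whiskerRight,
      ← coevaluation_comp_rightAdjointMate_assoc, whisker_exchange, Category.assoc]

lemma isIso_doubleDualTrace_of_iso_unit {X : C} [HasRightDual X] [HasRightDual Xᘁ]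
    (e : 𝟙_ C ≅ X) (φ : X ⟶ (Xᘁ)ᘁ) [IsIso φ] : IsIso (doubleDualTrace φ) := by
  have := isIso_coevaluation_of_iso_unit (Y := Xᘁ) e
  have := isIso_evaluation_of_iso_unit (Y := (Xᘁ)ᘁ)
    (asIso (η_ X (Xᘁ)) ≪≫ whiskerRightIso e.symm _ ≪≫ λ_ _)
  unfold doubleDualTrace
  infer_instance

end Trace

section Projective

variable [RigidCategory C]

lemma projective_tensorObj (P X : C) [Projective P] : Projective (P ⊗ X) :=
  (tensorRightAdjunction X (Xᘁ)).map_projective P ‹_›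

lemma projective_of_projective_unit [Projective (𝟙_ C)] (X : C) : Projective X :=
  Projective.of_iso (λ_ X) (projective_tensorObj _ _)

lemma projective_unit_of_isIso_doubleDualTrace {X : C} [Projective X] (φ : X ⟶ (Xᘁ)ᘁ)
    [IsIso φ] [IsIso (doubleDualTrace φ)] : Projective (𝟙_ C) :=
  have : Projective ((Xᘁ)ᘁ) := Projective.of_iso (asIso φ) ‹_›
  have := projective_tensorObj ((Xᘁ)ᘁ) Xᘁ
  Retract.projective ⟨η_ X (Xᘁ) ≫ φ ▷ Xᘁ, ε_ _ _ ≫ inv (doubleDualTrace φ), by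
    simpa only [doubleDualTrace, Category.assoc] using IsIso.hom_inv_id (doubleDualTrace φ)⟩

end Projective

end MonoidalCategory

end CategoryTheory

theorem cartan_matrix_degenerate_general {k : Type u} {C : Type v} [Field k] [IsAlgClosed k]
    [Category.{w} C] [Abelian C] [CategoryTheory.Linear k C] [MonoidalCategory C]
    [MonoidalPreadditive C] [MonoidalLinear k C] [RigidCategory C]
    [FiniteTensorCategory k C]
    {ι : Type} [Fintype ι] [DecidableEq ι]
    (L : ι → C)
    (hLall : ∀ X : C, Simple X → ∃ i, Nonempty (X ≅ L i))
    (P : ι → C)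
    (hP : ∀ i, Projective (P i) ∧ ∃ f : P i ⟶ L i, Epi f ∧
      ∀ (R : C) (g : R ⟶ P i), Epi (g ≫ f) → Epi g)
    -- Jordan–Hölder multiplicities
    (μ : C → ι → ℕ)
    (hμL : ∀ i j, μ (L i) j = if i = j then 1 else 0)
    (hμadd : ∀ S : ShortComplex C, S.ShortExact → ∀ j, μ S.X₂ j = μ S.X₁ j + μ S.X₃ j)
    -- `C` is not semisimple
    (hnss : ¬ ∀ X : C, Projective X)
    -- an isomorphism of additive functors `Id ≅ (−)ᘁᘁ`
    (u : ∀ X : C, X ≅ (Xᘁ)ᘁ)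
    (hu : ∀ {X Y : C} (f : X ⟶ Y), f ≫ (u Y).hom = (u X).hom ≫ ((fᘁ)ᘁ)) :
    Matrix.det (Matrix.of fun i j : ι => ((μ (P i) j : ℕ) : k)) = 0 := by
  have := FiniteTensorCategory.homFinite (k := k) (C := C)
  have : Simple (𝟙_ C) := FiniteTensorCategory.simpleUnit (k := k)
  have : ∀ X : C, IsArtinianObject X := fun X => ⟨(FiniteTensorCategory.finiteLength (k := k) X).2⟩
  set t : C → (𝟙_ C ⟶ 𝟙_ C) := fun X => doubleDualTrace (u X).hom
  have ht : IsAdditiveOnShortExact t := fun S hS => doubleDualTrace_add_of_shortExact hS _ hu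
  have htP : ∀ i, t (P i) = 0 := fun i => by
    have := (hP i).1
    by_contra h
    have := isIso_of_hom_simple h
    have := projective_unit_of_isIso_doubleDualTrace (u (P i)).hom
    exact hnss projective_of_projective_unit
  choose d hd using fun j => endomorphism_simple_eq_smul_id k (t (L j))
  refine Matrix.exists_mulVec_eq_zero_iff.1 ⟨d, fun hd0 => ?_, funext fun i => ?_⟩
  · obtain ⟨i, ⟨e⟩⟩ := hLall _ ‹Simple (𝟙_ C)›
    have := isIso_doubleDualTrace_of_iso_unit e (u (L i)).hom
    refine (isIso_iff_nonzero (t (L i))).1 this ?_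
    rw [← hd, hd0, Pi.zero_apply, zero_smul]
  · have := ht.eq_sum_nsmul L hLall μ hμL (fun j S hS => hμadd S hS j) (P i)
    simp only [htP, ← hd, ← Nat.cast_smul_eq_nsmul k, smul_smul, ← Finset.sum_smul] at this
    exact (smul_eq_zero.1 this.symm).resolve_right (id_nonzero _)

/-- **Categorical Lorenz theorem.**  Let `C` be a finite tensor category over an
algebraically closed field `k`, with complete family of pairwise non-isomorphic simples
`L i` and projective covers `P i`; let `μ X j = [X : L j]` be the Jordan–Hölder
multiplicities, so that `C_{ij} = μ (P i) j` is the Cartan matrix.  Assume `C` is not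
semisimple (i.e. not every object is projective) and that there is an isomorphism of additive
functors `u : Id → (−)ᘁᘁ` (e.g. `C` is braided).  Then the Cartan matrix, viewed as a matrix
over `k`, is degenerate: its determinant vanishes. -/
theorem cartan_matrix_degenerate {k : Type u} {C : Type v} [Field k] [IsAlgClosed k]
    [Category.{w} C] [Abelian C] [CategoryTheory.Linear k C] [MonoidalCategory C]
    [MonoidalPreadditive C] [MonoidalLinear k C] [RigidCategory C]
    [FiniteTensorCategory k C]
    {ι : Type} [Fintype ι] [DecidableEq ι]
    (L : ι → C) (hL : ∀ i, Simple (L i))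
    (hLall : ∀ X : C, Simple X → ∃ i, Nonempty (X ≅ L i))
    (hLdist : ∀ i j, Nonempty (L i ≅ L j) → i = j)
    (P : ι → C)
    (hP : ∀ i, Projective (P i) ∧ ∃ f : P i ⟶ L i, Epi f ∧
      ∀ (R : C) (g : R ⟶ P i), Epi (g ≫ f) → Epi g)
    -- Jordan–Hölder multiplicities
    (μ : C → ι → ℕ)
    (hμL : ∀ i j, μ (L i) j = if i = j then 1 else 0)
    (hμadd : ∀ S : ShortComplex C, S.ShortExact → ∀ j, μ S.X₂ j = μ S.X₁ j + μ S.X₃ j)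
    -- `C` is not semisimple
    (hnss : ¬ ∀ X : C, Projective X)
    -- an isomorphism of additive functors `Id ≅ (−)ᘁᘁ`
    (u : ∀ X : C, X ≅ (Xᘁ)ᘁ)
    (hu : ∀ {X Y : C} (f : X ⟶ Y), f ≫ (u Y).hom = (u X).hom ≫ ((fᘁ)ᘁ)) :
    Matrix.det (Matrix.of fun i j : ι => ((μ (P i) j : ℕ) : k)) = 0 :=
  cartan_matrix_degenerate_general L hLall P hP μ hμL hμadd hnss u hu
end
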